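/- arXiv:1911.08204 — 2 statements merged into one kernel-verified Lean document; each statement's English description precedes it below -/
import Mathlib

section
/- Let F : R × R^N × S^N → R be continuous, degenerate elliptic (F(u,p,X) ≤ F(u,p,Y) whenever X ≤ Y), nonincreasing in u for u ≥ 0 (F(u,p,X) ≤ F(0,p,X) if u ≥ 0), and satisfy F(0,0,0) ≤ 0. Let U ⊆ Ω be open and satisfy the geometric condition: for all φ ∈ C²(Ω) and x̂ ∈ Ω \ U with φ ≤ φ(x̂) = 0 on Ω \ U one has F(φ(x̂), Dφ(x̂), D²φ(x̂)) ≤ 0. Then the indicator function v = 1_U (value 1 on U, 0 elsewhere) is a lower semicontinuous viscosity supersolution of F(v, Dv, D²v) = 0 on Ω, with min_Ω v = 0 if U ≠ Ω, and U = {x ∈ Ω : v(x) > 0}. -/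
/-!
A test function `φ` touching `1_U` from below at `x̂ ∈ U` has a local maximum there, since
`1_U` is constant near `x̂`: so `Dφ(x̂) = 0` and `D²φ(x̂) ≤ 0`, and ellipticity, monotonicity in
`u` and `F(0,0,0) ≤ 0` give `F(1, 0, D²φ(x̂)) ≤ F(0, 0, 0) ≤ 0`. At `x̂ ∈ Ω \ U` touching from
below says exactly `φ ≤ φ(x̂) = 0` on `Ω \ U`, which is the geometric condition.
-/

open Classical in
/-- Eigenvalues of a real symmetric matrix arranged in nondecreasing order
(junk value `0` if the matrix is not symmetric). -/
noncomputable def sortedEig {N : ℕ} (A : Matrix (Fin N) (Fin N) ℝ) : Fin N → ℝ :=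
  if h : A.IsHermitian then h.eigenvalues ∘ ⇑(Tuple.sort h.eigenvalues) else 0

/-- `P_k^-(A)`: the sum of the `k` smallest eigenvalues of `A`. -/
noncomputable def sumMinEig {N : ℕ} (k : ℕ) (A : Matrix (Fin N) (Fin N) ℝ) : ℝ :=
  ∑ i ∈ Finset.univ.filter (fun i : Fin N => (i : ℕ) < k), sortedEig A i

/-- The Hessian matrix of `φ` at `x`. -/
noncomputable def hess {N : ℕ} (φ : EuclideanSpace ℝ (Fin N) → ℝ)
    (x : EuclideanSpace ℝ (Fin N)) : Matrix (Fin N) (Fin N) ℝ :=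
  fun i j => iteratedFDeriv ℝ 2 φ x ![EuclideanSpace.single i 1, EuclideanSpace.single j 1]

open Filter Topology Matrix Set

theorem IsLocalMax.deriv_deriv_nonpos {f : ℝ → ℝ} {a : ℝ} (hmax : IsLocalMax f a)
    (hf : ContinuousAt f a) : deriv (deriv f) a ≤ 0 := by
  by_contra! hpos
  -- By the second derivative test `a` is also a local minimum, so `f` is locally constant.
  have hmin : IsLocalMin f a := isLocalMin_of_deriv_deriv_pos hpos hmax.deriv_eq_zero hf
  have hconst : f =ᶠ[𝓝 a] fun _ => f a :=
    (hmin.and hmax).mono fun _ hx => le_antisymm hx.2 hx.1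
  have : deriv (deriv f) a = 0 := by
    rw [hconst.deriv.deriv_eq]
    simp
  exact hpos.ne' this

theorem IsLocalMax.fderiv_fderiv_apply_self_nonpos {E : Type*} [NormedAddCommGroup E]
    [NormedSpace ℝ E] {φ : E → ℝ} {a : E} (hmax : IsLocalMax φ a) (hφ : ContDiffAt ℝ 2 φ a)
    (v : E) : fderiv ℝ (fderiv ℝ φ) a v v ≤ 0 := by
  set γ : ℝ → E := fun t => a + t • v
  have hγ : ∀ t, HasDerivAt γ v t := fun t =>
    (((hasDerivAt_id t).smul_const v).const_add a).congr_deriv (one_smul ℝ v)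
  have hγ0 : γ 0 = a := by simp [γ]
  have hγa : Tendsto γ (𝓝 0) (𝓝 a) := hγ0 ▸ (hγ 0).continuousAt.tendsto
  have hdiff : ∀ᶠ t in 𝓝 0, DifferentiableAt ℝ φ (γ t) :=
    hγa.eventually <| (hφ.eventually (by simp)).mono fun _ h => h.differentiableAt two_ne_zero
  have hderiv : deriv (φ ∘ γ) =ᶠ[𝓝 0] fun t => fderiv ℝ φ (γ t) v :=
    hdiff.mono fun t ht => (ht.hasFDerivAt.comp_hasDerivAt t (hγ t)).deriv
  have hφ' : HasFDerivAt (fderiv ℝ φ) (fderiv ℝ (fderiv ℝ φ) a) (γ 0) := by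
    rw [hγ0]
    exact ((hφ.fderiv_right (m := 1) le_rfl).differentiableAt one_ne_zero).hasFDerivAt
  have hderiv2 : HasDerivAt (fun t => fderiv ℝ φ (γ t) v) (fderiv ℝ (fderiv ℝ φ) a v v) 0 :=
    (ContinuousLinearMap.apply ℝ ℝ v).hasFDerivAt.comp_hasDerivAt 0 (hφ'.comp_hasDerivAt 0 (hγ 0))
  have hmax' : IsLocalMax (φ ∘ γ) 0 := hγa.eventually hmax |>.mono fun t ht => by simpa [hγ0]
  rw [← hderiv2.deriv, ← hderiv.deriv_eq]
  exact hmax'.deriv_deriv_nonpos (hγ0 ▸ hφ.continuousAt |>.comp (hγ 0).continuousAt)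

theorem hess_isHermitian {N : ℕ} {φ : EuclideanSpace ℝ (Fin N) → ℝ} {x : EuclideanSpace ℝ (Fin N)}
    (hφ : ContDiffAt ℝ 2 φ x) : (hess φ x).IsHermitian := by
  ext i j
  simpa [hess, iteratedFDeriv_two_apply] using
    hφ.isSymmSndFDerivAt (by simp [minSmoothness_of_isRCLikeNormedField]) _ _

theorem hess_eq_toMatrix₂ {N : ℕ} (φ : EuclideanSpace ℝ (Fin N) → ℝ)
    (x : EuclideanSpace ℝ (Fin N)) :
    hess φ x = LinearMap.toMatrix₂ (PiLp.basisFun 2 ℝ (Fin N)) (PiLp.basisFun 2 ℝ (Fin N))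
      (fderiv ℝ (fderiv ℝ φ) x).toLinearMap₁₂ := by
  ext i j
  simp [hess, iteratedFDeriv_two_apply]

theorem dotProduct_hess_mulVec {N : ℕ} (φ : EuclideanSpace ℝ (Fin N) → ℝ)
    (x : EuclideanSpace ℝ (Fin N)) (v : Fin N → ℝ) :
    v ⬝ᵥ hess φ x *ᵥ v = fderiv ℝ (fderiv ℝ φ) x (WithLp.toLp 2 v) (WithLp.toLp 2 v) := by
  simpa [hess_eq_toMatrix₂, PiLp.basisFun_equivFun] using dotProduct_toMatrix₂_mulVec
    (PiLp.basisFun 2 ℝ (Fin N)) (PiLp.basisFun 2 ℝ (Fin N))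
    (fderiv ℝ (fderiv ℝ φ) x).toLinearMap₁₂ v v

theorem IsLocalMax.posSemidef_zero_sub_hess {N : ℕ} {φ : EuclideanSpace ℝ (Fin N) → ℝ}
    {a : EuclideanSpace ℝ (Fin N)} (hmax : IsLocalMax φ a) (hφ : ContDiffAt ℝ 2 φ a) :
    (0 - hess φ a).PosSemidef := by
  refine posSemidef_iff_dotProduct_mulVec.2 ⟨isHermitian_zero.sub (hess_isHermitian hφ), fun v => ?_⟩
  rw [star_trivial, zero_sub, neg_mulVec, dotProduct_neg, dotProduct_hess_mulVec, neg_nonneg]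
  exact hmax.fderiv_fderiv_apply_self_nonpos hφ _

def IsViscositySupersolution {N : ℕ}
    (F : ℝ → EuclideanSpace ℝ (Fin N) → Matrix (Fin N) (Fin N) ℝ → ℝ)
    (v : EuclideanSpace ℝ (Fin N) → ℝ) (Ω : Set (EuclideanSpace ℝ (Fin N))) : Prop :=
  ∀ φ : EuclideanSpace ℝ (Fin N) → ℝ, ContDiffOn ℝ 2 φ Ω → ∀ xh ∈ Ω,
    (∀ x ∈ Ω, v xh - φ xh ≤ v x - φ x) → v xh - φ xh = 0 →
      F (v xh) (gradient φ xh) (hess φ xh) ≤ 0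

theorem isViscositySupersolution_indicator_one {N : ℕ}
    {F : ℝ → EuclideanSpace ℝ (Fin N) → Matrix (Fin N) (Fin N) ℝ → ℝ}
    (hell : ∀ (u : ℝ) (p : EuclideanSpace ℝ (Fin N)) (X Y : Matrix (Fin N) (Fin N) ℝ),
      X.IsHermitian → Y.IsHermitian → (Y - X).PosSemidef → F u p X ≤ F u p Y)
    (hmonou : ∀ (u : ℝ) (p : EuclideanSpace ℝ (Fin N)) (X : Matrix (Fin N) (Fin N) ℝ),
      0 ≤ u → F u p X ≤ F 0 p X)
    (hF0 : F 0 0 0 ≤ 0) {Ω U : Set (EuclideanSpace ℝ (Fin N))} (hΩ : IsOpen Ω) (hU : IsOpen U)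
    (hUΩ : U ⊆ Ω)
    (hG : ∀ φ : EuclideanSpace ℝ (Fin N) → ℝ, ContDiffOn ℝ 2 φ Ω →
      ∀ xh ∈ Ω \ U, (∀ x ∈ Ω \ U, φ x ≤ 0) → φ xh = 0 →
        F (φ xh) (gradient φ xh) (hess φ xh) ≤ 0) :
    IsViscositySupersolution F (U.indicator 1) Ω := by
  intro φ hφ xh hxh hmin hzero
  by_cases hxU : xh ∈ U
  · have hmax : IsLocalMax φ xh := by
      filter_upwards [hU.mem_nhds hxU] with y hy
      have h := hmin y (hUΩ hy)
      rw [indicator_of_mem hy, indicator_of_mem hxU, Pi.one_apply, Pi.one_apply] at h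
      linarith
    have hφa : ContDiffAt ℝ 2 φ xh := hφ.contDiffAt (hΩ.mem_nhds hxh)
    rw [indicator_of_mem hxU, Pi.one_apply, gradient, hmax.fderiv_eq_zero, map_zero]
    calc F 1 0 (hess φ xh)
        ≤ F 1 0 0 := hell 1 0 _ 0 (hess_isHermitian hφa) isHermitian_zero
          (hmax.posSemidef_zero_sub_hess hφa)
      _ ≤ F 0 0 0 := hmonou 1 0 0 zero_le_one
      _ ≤ 0 := hF0
  · have hφx : φ xh = 0 := by simpa [hxU] using hzero
    have hle : ∀ x ∈ Ω \ U, φ x ≤ 0 := fun x hx => by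
      simpa [hxU, hx.2, hφx] using hmin x hx.1
    simpa [hxU, hφx] using hG φ hφ xh ⟨hxh, hxU⟩ hle hφx

theorem stmt7_general {N : ℕ}
    (F : ℝ → EuclideanSpace ℝ (Fin N) → Matrix (Fin N) (Fin N) ℝ → ℝ)
    (hell : ∀ (u : ℝ) (p : EuclideanSpace ℝ (Fin N)) (X Y : Matrix (Fin N) (Fin N) ℝ),
      X.IsHermitian → Y.IsHermitian → (Y - X).PosSemidef → F u p X ≤ F u p Y)
    (hmonou : ∀ (u : ℝ) (p : EuclideanSpace ℝ (Fin N)) (X : Matrix (Fin N) (Fin N) ℝ),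
      0 ≤ u → F u p X ≤ F 0 p X)
    (hF0 : F 0 0 0 ≤ 0)
    (Ω U : Set (EuclideanSpace ℝ (Fin N))) (hΩ : IsOpen Ω) (hUopen : IsOpen U)
    (hUΩ : U ⊆ Ω)
    (hG : ∀ φ : EuclideanSpace ℝ (Fin N) → ℝ, ContDiffOn ℝ 2 φ Ω →
      ∀ xh ∈ Ω \ U, (∀ x ∈ Ω \ U, φ x ≤ 0) → φ xh = 0 →
        F (φ xh) (gradient φ xh) (hess φ xh) ≤ 0) :
    LowerSemicontinuousOn (U.indicator (1 : EuclideanSpace ℝ (Fin N) → ℝ)) Ω ∧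
      (∀ φ : EuclideanSpace ℝ (Fin N) → ℝ, ContDiffOn ℝ 2 φ Ω → ∀ xh ∈ Ω,
        (∀ x ∈ Ω, U.indicator 1 xh - φ xh ≤ U.indicator 1 x - φ x) →
        U.indicator 1 xh - φ xh = 0 →
          F (U.indicator 1 xh) (gradient φ xh) (hess φ xh) ≤ 0) ∧
      (U ≠ Ω → ∃ x ∈ Ω, U.indicator (1 : EuclideanSpace ℝ (Fin N) → ℝ) x = 0 ∧
        ∀ y ∈ Ω, U.indicator (1 : EuclideanSpace ℝ (Fin N) → ℝ) x ≤ U.indicator 1 y) ∧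
      {x ∈ Ω | 0 < U.indicator (1 : EuclideanSpace ℝ (Fin N) → ℝ) x} = U := by
  refine ⟨hUopen.lowerSemicontinuousOn_indicator zero_le_one,
    isViscositySupersolution_indicator_one hell hmonou hF0 hΩ hUopen hUΩ hG, fun hne => ?_, ?_⟩
  · obtain ⟨x, hxΩ, hxU⟩ := exists_of_ssubset (hUΩ.ssubset_of_ne hne)
    refine ⟨x, hxΩ, indicator_of_notMem hxU 1, fun y _ => ?_⟩
    rw [indicator_of_notMem hxU]
    exact indicator_nonneg (fun _ _ => zero_le_one) y
  · ext x
    by_cases hx : x ∈ U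
    · simp [hx, hUΩ hx]
    · simp [hx]

/-- If an open set `U ⊆ Ω` satisfies the geometric condition (G_{F,Ω,U}),
then the indicator function of `U` is a lower semicontinuous supersolution of
`F(v, Dv, D²v) = 0` on `Ω`, with minimum `0` when `U ≠ Ω`, whose positivity
set is `U`. -/
theorem stmt7 {N : ℕ}
    (F : ℝ → EuclideanSpace ℝ (Fin N) → Matrix (Fin N) (Fin N) ℝ → ℝ)
    (hFc : Continuous fun q : ℝ × EuclideanSpace ℝ (Fin N) × Matrix (Fin N) (Fin N) ℝ =>
      F q.1 q.2.1 q.2.2)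
    (hell : ∀ (u : ℝ) (p : EuclideanSpace ℝ (Fin N)) (X Y : Matrix (Fin N) (Fin N) ℝ),
      X.IsHermitian → Y.IsHermitian → (Y - X).PosSemidef → F u p X ≤ F u p Y)
    (hmonou : ∀ (u : ℝ) (p : EuclideanSpace ℝ (Fin N)) (X : Matrix (Fin N) (Fin N) ℝ),
      0 ≤ u → F u p X ≤ F 0 p X)
    (hF0 : F 0 0 0 ≤ 0)
    (Ω U : Set (EuclideanSpace ℝ (Fin N))) (hΩ : IsOpen Ω) (hUopen : IsOpen U)
    (hUΩ : U ⊆ Ω)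
    (hG : ∀ φ : EuclideanSpace ℝ (Fin N) → ℝ, ContDiffOn ℝ 2 φ Ω →
      ∀ xh ∈ Ω \ U, (∀ x ∈ Ω \ U, φ x ≤ 0) → φ xh = 0 →
        F (φ xh) (gradient φ xh) (hess φ xh) ≤ 0) :
    LowerSemicontinuousOn (U.indicator (1 : EuclideanSpace ℝ (Fin N) → ℝ)) Ω ∧
      (∀ φ : EuclideanSpace ℝ (Fin N) → ℝ, ContDiffOn ℝ 2 φ Ω → ∀ xh ∈ Ω,
        (∀ x ∈ Ω, U.indicator 1 xh - φ xh ≤ U.indicator 1 x - φ x) →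
        U.indicator 1 xh - φ xh = 0 →
          F (U.indicator 1 xh) (gradient φ xh) (hess φ xh) ≤ 0) ∧
      (U ≠ Ω → ∃ x ∈ Ω, U.indicator (1 : EuclideanSpace ℝ (Fin N) → ℝ) x = 0 ∧
        ∀ y ∈ Ω, U.indicator (1 : EuclideanSpace ℝ (Fin N) → ℝ) x ≤ U.indicator 1 y) ∧
      {x ∈ Ω | 0 < U.indicator (1 : EuclideanSpace ℝ (Fin N) → ℝ) x} = U :=
  stmt7_general F hell hmonou hF0 Ω U hΩ hUopen hUΩ hG
end

section
/- Let N ≥ 2k and 0 < α < 1. The function u(x) = Σ_{i=1}^k |x_i|^α on R^N is a viscosity supersolution of λ_k(D²u) = 0 on R^N; moreover, at points where all x_1,...,x_k are nonzero, λ_k(D²u(x)) = max{α(α−1)|x_1|^{α−2}, ..., α(α−1)|x_k|^{α−2}} < 0. -/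
open Finset Module Submodule Filter Topology Matrix
open scoped RealInnerProductSpace

theorem Submodule.inf_ne_bot_of_finrank_lt_add {K V : Type*} [DivisionRing K] [AddCommGroup V]
    [Module K V] [FiniteDimensional K V] (U W : Submodule K V)
    (h : finrank K V < finrank K U + finrank K W) : U ⊓ W ≠ ⊥ := by
  intro hUW
  have := finrank_sup_add_finrank_inf_eq U W
  rw [hUW, finrank_bot] at this
  linarith [(U ⊔ W).finrank_le]

namespace OrthonormalBasis

variable {ι 𝕜 E : Type*} [Fintype ι] [RCLike 𝕜] [NormedAddCommGroup E] [InnerProductSpace 𝕜 E]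
  (b : OrthonormalBasis ι 𝕜 E)

theorem finrank_span_image (s : Finset ι) : finrank 𝕜 (span 𝕜 (b '' s)) = #s := by
  rw [Set.image_eq_range]
  exact (finrank_span_eq_card
    (b.orthonormal.linearIndependent.comp ((↑) : s → ι) Subtype.val_injective)).trans (by simp)

theorem repr_eq_zero_of_mem_span_image {s : Set ι} {v : E} (hv : v ∈ span 𝕜 (b '' s)) {i : ι}
    (hi : i ∉ s) : b.repr v i = 0 := by
  rw [← b.coe_toBasis, Basis.mem_span_image] at hv
  rw [← b.coe_toBasis_repr_apply]
  exact Finsupp.notMem_support_iff.1 fun h => hi (hv h)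

end OrthonormalBasis

namespace LinearMap.IsSymmetric

variable {ι E : Type*} [Fintype ι] [NormedAddCommGroup E] [InnerProductSpace ℝ E]
  {T : E →ₗ[ℝ] E} (b : OrthonormalBasis ι ℝ E) {e : ι → ℝ}

theorem inner_apply_self_eq_sum (hT : T.IsSymmetric) (hb : ∀ i, T (b i) = e i • b i) (v : E) :
    ⟪T v, v⟫ = ∑ i, e i * b.repr v i ^ 2 := by
  rw [← b.repr.inner_map_map, PiLp.inner_apply]
  refine sum_congr rfl fun i _ => ?_
  rw [b.repr_apply_apply, b.repr_apply_apply, ← hT, hb, real_inner_smul_left]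
  simp only [RCLike.inner_apply, conj_trivial]
  ring

theorem exists_mem_lt_inner_apply_self [FiniteDimensional ℝ E] (hT : T.IsSymmetric)
    (hb : ∀ i, T (b i) = e i • b i) (W : Submodule ℝ E) (s : Finset ι)
    (hs : finrank ℝ E < #s + finrank ℝ W) {μ : ℝ} (hμ : ∀ i ∈ s, μ < e i) :
    ∃ v ∈ W, μ * ‖v‖ ^ 2 < ⟪T v, v⟫ := by
  rw [← b.finrank_span_image s] at hs
  obtain ⟨v, ⟨hvs, hvW⟩, hv⟩ := (Submodule.ne_bot_iff _).1 (inf_ne_bot_of_finrank_lt_add _ W hs)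
  obtain ⟨i₀, hi₀⟩ : ∃ i, b.repr v i ≠ 0 := by
    by_contra! h
    exact hv (b.repr.injective (by ext i; simp [h]))
  have hi₀s : i₀ ∈ s := by
    by_contra h
    exact hi₀ (b.repr_eq_zero_of_mem_span_image hvs h)
  have hpos : 0 < ∑ i, (e i - μ) * b.repr v i ^ 2 := by
    refine sum_pos' (fun i _ => ?_)
      ⟨i₀, mem_univ _, mul_pos (sub_pos.2 (hμ i₀ hi₀s)) (sq_pos_of_ne_zero hi₀)⟩
    by_cases hi : i ∈ s
    · exact mul_nonneg (sub_pos.2 (hμ i hi)).le (sq_nonneg _)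
    · simp [b.repr_eq_zero_of_mem_span_image hvs hi]
  refine ⟨v, hvW, ?_⟩
  rw [hT.inner_apply_self_eq_sum b hb, ← b.repr.norm_map, EuclideanSpace.real_norm_sq_eq, mul_sum,
    ← sub_pos, ← sum_sub_distrib]
  simpa only [sub_mul] using hpos

theorem exists_mem_inner_apply_self_lt [FiniteDimensional ℝ E] (hT : T.IsSymmetric)
    (hb : ∀ i, T (b i) = e i • b i) (W : Submodule ℝ E) (s : Finset ι)
    (hs : finrank ℝ E < #s + finrank ℝ W) {μ : ℝ} (hμ : ∀ i ∈ s, e i < μ) :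
    ∃ v ∈ W, ⟪T v, v⟫ < μ * ‖v‖ ^ 2 := by
  have hnT : (-T).IsSymmetric := fun x y => by simp [hT x y]
  obtain ⟨v, hvW, hv⟩ := hnT.exists_mem_lt_inner_apply_self b (e := -e) (fun i => by simp [hb])
    W s hs (μ := -μ) fun i hi => neg_lt_neg (hμ i hi)
  refine ⟨v, hvW, ?_⟩
  simp only [neg_apply, inner_neg_left] at hv
  linarith

end LinearMap.IsSymmetric

namespace Matrix.IsHermitian

variable {N : ℕ} {A : Matrix (Fin N) (Fin N) ℝ}

theorem sortedEig_eq (hA : A.IsHermitian) :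
    sortedEig A = hA.eigenvalues ∘ Tuple.sort hA.eigenvalues := by
  rw [sortedEig, dif_pos hA]

theorem card_Ici_le_card_lt_eigenvalues (hA : A.IsHermitian) {j : Fin N} {μ : ℝ}
    (h : μ < sortedEig A j) : #(Ici j) ≤ #{i | μ < hA.eigenvalues i} := by
  refine card_le_card_of_injOn (Tuple.sort hA.eigenvalues) (fun i hi => ?_)
    (Tuple.sort hA.eigenvalues).injective.injOn
  rw [sortedEig_eq hA] at h
  simp only [coe_filter, mem_univ, true_and, Set.mem_ofPred_eq]
  exact h.trans_le (Tuple.monotone_sort hA.eigenvalues (mem_Ici.1 hi))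

theorem card_Iic_le_card_eigenvalues_lt (hA : A.IsHermitian) {j : Fin N} {μ : ℝ}
    (h : sortedEig A j < μ) : #(Iic j) ≤ #{i | hA.eigenvalues i < μ} := by
  refine card_le_card_of_injOn (Tuple.sort hA.eigenvalues) (fun i hi => ?_)
    (Tuple.sort hA.eigenvalues).injective.injOn
  rw [sortedEig_eq hA] at h
  simp only [coe_filter, mem_univ, true_and, Set.mem_ofPred_eq]
  exact (Tuple.monotone_sort hA.eigenvalues (mem_Iic.1 hi)).trans_lt h

theorem toEuclideanLin_eigenvectorBasis (hA : A.IsHermitian) (i : Fin N) :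
    toEuclideanLin A (hA.eigenvectorBasis i) = hA.eigenvalues i • hA.eigenvectorBasis i := by
  ext1
  simp [mulVec_eigenvectorBasis]

theorem sortedEig_le_of_forall_mem (hA : A.IsHermitian) {j : Fin N} {μ : ℝ}
    (W : Submodule ℝ (EuclideanSpace ℝ (Fin N))) (hW : (j : ℕ) + 1 ≤ finrank ℝ W)
    (hQ : ∀ v ∈ W, ⟪toEuclideanLin A v, v⟫ ≤ μ * ‖v‖ ^ 2) : sortedEig A j ≤ μ := by
  by_contra! h
  have hcard := hA.card_Ici_le_card_lt_eigenvalues h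
  rw [Fin.card_Ici] at hcard
  obtain ⟨v, hvW, hv⟩ := (isSymmetric_toEuclideanLin_iff.2 hA).exists_mem_lt_inner_apply_self
    hA.eigenvectorBasis hA.toEuclideanLin_eigenvectorBasis W {i | μ < hA.eigenvalues i}
    (by rw [finrank_euclideanSpace_fin]; omega) fun i hi => (mem_filter.1 hi).2
  exact (hQ v hvW).not_gt hv

theorem le_sortedEig_of_forall_mem (hA : A.IsHermitian) {j : Fin N} {μ : ℝ}
    (W : Submodule ℝ (EuclideanSpace ℝ (Fin N))) (hW : N - j ≤ finrank ℝ W)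
    (hQ : ∀ v ∈ W, μ * ‖v‖ ^ 2 ≤ ⟪toEuclideanLin A v, v⟫) : μ ≤ sortedEig A j := by
  by_contra! h
  have hcard := hA.card_Iic_le_card_eigenvalues_lt h
  rw [Fin.card_Iic] at hcard
  obtain ⟨v, hvW, hv⟩ := (isSymmetric_toEuclideanLin_iff.2 hA).exists_mem_inner_apply_self_lt
    hA.eigenvectorBasis hA.toEuclideanLin_eigenvectorBasis W {i | hA.eigenvalues i < μ}
    (by rw [finrank_euclideanSpace_fin]; omega) fun i hi => (mem_filter.1 hi).2
  exact (hQ v hvW).not_gt hv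

end Matrix.IsHermitian

namespace Matrix

variable {N : ℕ}

theorem inner_toEuclideanLin_diagonal_self {ι : Type*} [Fintype ι] [DecidableEq ι] (d : ι → ℝ)
    (v : EuclideanSpace ℝ ι) : ⟪toEuclideanLin (diagonal d) v, v⟫ = ∑ i, d i * v i ^ 2 := by
  simp only [EuclideanSpace.inner_eq_star_dotProduct, ofLp_toLpLin, toLin'_apply, mulVec_diagonal,
    dotProduct, star_trivial]
  exact sum_congr rfl fun i _ => by ring

theorem sortedEig_diagonal_le {d : Fin N → ℝ} {j : Fin N} {μ : ℝ} (s : Finset (Fin N))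
    (hs : (j : ℕ) + 1 ≤ #s) (hd : ∀ i ∈ s, d i ≤ μ) : sortedEig (diagonal d) j ≤ μ := by
  let e := EuclideanSpace.basisFun (Fin N) ℝ
  refine (isHermitian_diagonal d).sortedEig_le_of_forall_mem (span ℝ (e '' s))
    (by rwa [e.finrank_span_image]) fun v hv => ?_
  rw [inner_toEuclideanLin_diagonal_self, EuclideanSpace.real_norm_sq_eq, mul_sum]
  refine sum_le_sum fun i _ => ?_
  by_cases hi : i ∈ s
  · exact mul_le_mul_of_nonneg_right (hd i hi) (sq_nonneg _)
  · simp [show v i = 0 from e.repr_eq_zero_of_mem_span_image hv hi]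

theorem le_sortedEig_diagonal {d : Fin N → ℝ} {j : Fin N} {μ : ℝ} (s : Finset (Fin N))
    (hs : N - j ≤ #s) (hd : ∀ i ∈ s, μ ≤ d i) : μ ≤ sortedEig (diagonal d) j := by
  let e := EuclideanSpace.basisFun (Fin N) ℝ
  refine (isHermitian_diagonal d).le_sortedEig_of_forall_mem (span ℝ (e '' s))
    (by rwa [e.finrank_span_image]) fun v hv => ?_
  rw [inner_toEuclideanLin_diagonal_self, EuclideanSpace.real_norm_sq_eq, mul_sum]
  refine sum_le_sum fun i _ => ?_
  by_cases hi : i ∈ s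
  · exact mul_le_mul_of_nonneg_right (hd i hi) (sq_nonneg _)
  · simp [show v i = 0 from e.repr_eq_zero_of_mem_span_image hv hi]

theorem isGreatest_image_sortedEig_diagonal {d : Fin N → ℝ} {s : Finset (Fin N)} {j : Fin N}
    (hs : #s = j + 1) (hd : ∀ i ∈ s, ∀ i' ∉ s, d i ≤ d i') :
    IsGreatest (d '' s) (sortedEig (diagonal d) j) := by
  obtain ⟨i₀, hi₀, hmax⟩ := s.exists_max_image d (card_pos.1 (by omega))
  have heq : sortedEig (diagonal d) j = d i₀ := by
    refine le_antisymm (sortedEig_diagonal_le s hs.ge hmax)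
      (le_sortedEig_diagonal (insert i₀ sᶜ) ?_ ?_)
    · rw [card_insert_of_notMem (by simpa using hi₀), card_compl, Fintype.card_fin]
      omega
    · simpa using fun i' hi' => hd i₀ hi₀ i' hi'
  rw [heq]
  exact ⟨⟨i₀, hi₀, rfl⟩, Set.forall_mem_image.2 hmax⟩

end Matrix

section Hessian

variable {N : ℕ}

theorem hess_apply (φ : EuclideanSpace ℝ (Fin N) → ℝ) (x : EuclideanSpace ℝ (Fin N))
    (i j : Fin N) :
    hess φ x i j =
      fderiv ℝ (fderiv ℝ φ) x (EuclideanSpace.single i 1) (EuclideanSpace.single j 1) := by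
  simp [hess, iteratedFDeriv_two_apply]

theorem inner_toEuclideanLin_hess_self (φ : EuclideanSpace ℝ (Fin N) → ℝ)
    (x v : EuclideanSpace ℝ (Fin N)) :
    ⟪toEuclideanLin (hess φ x) v, v⟫ = fderiv ℝ (fderiv ℝ φ) x v v := by
  conv_rhs => rw [← (EuclideanSpace.basisFun (Fin N) ℝ).sum_repr v]
  simp only [EuclideanSpace.inner_eq_star_dotProduct, ofLp_toLpLin, toLin'_apply, dotProduct,
    mulVec, star_trivial, hess_apply, map_sum, map_smul, _root_.sum_apply, _root_.smul_apply,
    smul_eq_mul, EuclideanSpace.basisFun_apply, EuclideanSpace.basisFun_repr, mul_sum]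
  rw [sum_comm]
  exact sum_congr rfl fun i _ => sum_congr rfl fun j _ => by ring

theorem isHermitian_hess {φ : EuclideanSpace ℝ (Fin N) → ℝ} (hφ : ContDiff ℝ 2 φ)
    (x : EuclideanSpace ℝ (Fin N)) : (hess φ x).IsHermitian := by
  ext i j
  simp only [conjTranspose_apply, star_trivial, hess_apply]
  exact hφ.contDiffAt.isSymmSndFDerivAt (by simp) _ _

theorem hess_sum_eq_diagonal {s : Finset (Fin N)} {g g' : Fin N → ℝ → ℝ} {g'' : Fin N → ℝ}
    {x : EuclideanSpace ℝ (Fin N)}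
    (hg : ∀ i ∈ s, ∀ᶠ t in 𝓝 (x i), HasDerivAt (g i) (g' i t) t)
    (hg' : ∀ i ∈ s, HasDerivAt (g' i) (g'' i) (x i)) :
    hess (fun y => ∑ i ∈ s, g i (y i)) x = diagonal fun i => if i ∈ s then g'' i else 0 := by
  let p := EuclideanSpace.proj (𝕜 := ℝ) (ι := Fin N)
  have hD : fderiv ℝ (fun y : EuclideanSpace ℝ (Fin N) => ∑ i ∈ s, g i (y i))
      =ᶠ[𝓝 x] fun y => ∑ i ∈ s, g' i (y i) • p i := by
    have : ∀ᶠ y in 𝓝 x, ∀ i ∈ s, HasDerivAt (g i) (g' i (y i)) (y i) :=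
      (eventually_all_finset s).2 fun i hi => ((p i).continuous.tendsto x).eventually (hg i hi)
    filter_upwards [this] with y hy
    exact (HasFDerivAt.fun_sum fun i hi => (hy i hi).comp_hasFDerivAt y (p i).hasFDerivAt).fderiv
  have hD2 : HasFDerivAt (fun y : EuclideanSpace ℝ (Fin N) => ∑ i ∈ s, g' i (y i) • p i)
      (∑ i ∈ s, (g'' i • p i).smulRight (p i)) x :=
    HasFDerivAt.fun_sum fun i hi =>
      ((hg' i hi).comp_hasFDerivAt x (p i).hasFDerivAt).smul_const (p i)
  ext a b
  rw [hess_apply, hD.fderiv_eq, hD2.fderiv]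
  simp only [p, _root_.sum_apply, ContinuousLinearMap.smulRight_apply, _root_.smul_apply,
    PiLp.proj_apply, PiLp.single_apply, smul_eq_mul, diagonal_apply]
  by_cases hab : a = b <;> simp [hab, eq_comm]

end Hessian

theorem hasDerivAt_abs_rpow_of_ne_zero (p : ℝ) {r : ℝ} (hr : r ≠ 0) :
    HasDerivAt (fun t => |t| ^ p) (p * |r| ^ (p - 1) * SignType.sign r) r := by
  convert (hasDerivAt_abs hr).rpow_const (p := p) (Or.inl (abs_ne_zero.2 hr)) using 1
  ring

-- The sign is frozen at `r`, so that the derivative is differentiable at `r` as a function of `t`.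
theorem eventually_hasDerivAt_abs_rpow (p : ℝ) {r : ℝ} (hr : r ≠ 0) :
    ∀ᶠ t in 𝓝 r, HasDerivAt (fun t => |t| ^ p) (p * |t| ^ (p - 1) * SignType.sign r) t := by
  have hsign : ∀ᶠ t in 𝓝 r, SignType.sign t = SignType.sign r :=
    (continuousAt_sign_of_ne_zero hr).eventually_mem
      ((isOpen_discrete {SignType.sign r}).mem_nhds rfl)
  filter_upwards [hsign, eventually_ne_nhds hr] with t ht ht0
  rw [← ht]
  exact hasDerivAt_abs_rpow_of_ne_zero p ht0

theorem hasDerivAt_deriv_abs_rpow (p : ℝ) {r : ℝ} (hr : r ≠ 0) :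
    HasDerivAt (fun t => p * |t| ^ (p - 1) * SignType.sign r) (p * (p - 1) * |r| ^ (p - 2)) r := by
  have hsign : (SignType.sign r : ℝ) * SignType.sign r = 1 := by
    rcases hr.lt_or_gt with h | h <;> simp [h]
  refine (((hasDerivAt_abs_rpow_of_ne_zero (p - 1) hr).const_mul p).mul_const
    (SignType.sign r : ℝ)).congr_deriv ?_
  rw [show p - 1 - 1 = p - 2 by ring]
  linear_combination p * (p - 1) * |r| ^ (p - 2) * hsign

theorem hess_sum_abs_rpow {N : ℕ} {s : Finset (Fin N)} (p : ℝ) {x : EuclideanSpace ℝ (Fin N)}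
    (hx : ∀ i ∈ s, x i ≠ 0) :
    hess (fun y => ∑ i ∈ s, |y i| ^ p) x =
      diagonal fun i => if i ∈ s then p * (p - 1) * |x i| ^ (p - 2) else 0 :=
  hess_sum_eq_diagonal (g := fun _ t => |t| ^ p)
    (g' := fun i t => p * |t| ^ (p - 1) * SignType.sign (x i))
    (fun i hi => eventually_hasDerivAt_abs_rpow p (hx i hi))
    (fun i hi => hasDerivAt_deriv_abs_rpow p (hx i hi))

theorem deriv_deriv_nonpos_of_isLocalMax {f : ℝ → ℝ} {x₀ : ℝ} (h : IsLocalMax f x₀)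
    (hc : ContinuousAt f x₀) : deriv (deriv f) x₀ ≤ 0 := by
  by_contra! hpos
  have hconst : f =ᶠ[𝓝 x₀] fun _ => f x₀ :=
    ((isLocalMin_of_deriv_deriv_pos hpos h.deriv_eq_zero hc).and h).mono
      fun x hx => le_antisymm hx.2 hx.1
  rw [hconst.deriv.deriv_eq] at hpos
  simp at hpos

theorem fderiv_fderiv_apply_self_nonpos_of_isLocalMin_sub {E : Type*} [NormedAddCommGroup E]
    [NormedSpace ℝ E] {φ u : E → ℝ} (hφ : ContDiff ℝ 2 φ) {x v : E}
    (hmin : IsLocalMin (fun y => u y - φ y) x) (hflat : ∀ t : ℝ, u (x + t • v) = u x) :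
    fderiv ℝ (fderiv ℝ φ) x v v ≤ 0 := by
  let L : ℝ → E := fun t => x + t • v
  have hL : ∀ t, HasDerivAt L v t := fun t =>
    (((hasDerivAt_id t).smul_const v).const_add x).congr_deriv (one_smul ℝ v)
  have hL0 : L 0 = x := by simp [L]
  have hφ' : deriv (fun t => φ (L t)) = fun t => fderiv ℝ φ (L t) v := funext fun t =>
    ((hφ.differentiable two_ne_zero (L t)).hasFDerivAt.comp_hasDerivAt t (hL t)).deriv
  have hφ'' : HasDerivAt (fun t => fderiv ℝ φ (L t) v) (fderiv ℝ (fderiv ℝ φ) x v v) 0 := by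
    have hD2 := ((hφ.fderiv_right (m := 1) le_rfl).differentiable one_ne_zero x).hasFDerivAt
    simpa using (hD2.comp_hasDerivAt_of_eq 0 (hL 0) hL0.symm).clm_apply (hasDerivAt_const 0 v)
  have hmax : IsLocalMax (fun t => φ (L t)) 0 := by
    have hmin' : IsLocalMin (fun y => u y - φ y) (L 0) := hL0 ▸ hmin
    filter_upwards [hmin'.comp_continuous (hL 0).continuousAt] with t ht
    have hLt : u (L t) = u (L 0) := by simp only [L, hflat, zero_smul, add_zero]
    simp only [Function.comp_apply, hLt] at ht
    linarith
  rw [← hφ''.deriv, ← hφ']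
  exact deriv_deriv_nonpos_of_isLocalMax hmax
    (hφ.continuous.continuousAt.comp (hL 0).continuousAt)

theorem sortedEig_hess_nonpos_of_isLocalMin_sub {N : ℕ} {φ u : EuclideanSpace ℝ (Fin N) → ℝ}
    (hφ : ContDiff ℝ 2 φ) {x : EuclideanSpace ℝ (Fin N)}
    (hmin : IsLocalMin (fun y => u y - φ y) x) (s : Finset (Fin N))
    (hu : ∀ y z : EuclideanSpace ℝ (Fin N), (∀ i ∈ s, y i = z i) → u y = u z)
    {j : Fin N} (hj : (j : ℕ) + 1 ≤ N - #s) : sortedEig (hess φ x) j ≤ 0 := by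
  let e := EuclideanSpace.basisFun (Fin N) ℝ
  refine (isHermitian_hess hφ x).sortedEig_le_of_forall_mem (span ℝ (e '' ↑sᶜ))
    (by rwa [e.finrank_span_image, card_compl, Fintype.card_fin]) fun v hv => ?_
  rw [inner_toEuclideanLin_hess_self, zero_mul]
  refine fderiv_fderiv_apply_self_nonpos_of_isLocalMin_sub hφ hmin fun t => hu _ _ fun i hi => ?_
  simp [show v i = 0 from e.repr_eq_zero_of_mem_span_image hv (by simpa using hi)]

/-- For `N ≥ 2k` and `0 < α < 1`, `u(x) = ∑_{i<k} |x_i|^α` is a viscosity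
supersolution of `λ_k(D²u) = 0` on `ℝ^N`, and at points where all
`x_1, …, x_k` are nonzero,
`λ_k(D²u(x)) = max_i α(α−1)|x_i|^{α−2} < 0`. -/
theorem stmt17 {N k : ℕ} (hk1 : 1 ≤ k) (hNk : 2 * k ≤ N)
    (α : ℝ) (hα0 : 0 < α) (hα1 : α < 1)
    (u : EuclideanSpace ℝ (Fin N) → ℝ)
    (hu : u = fun x => ∑ i ∈ Finset.univ.filter (fun i : Fin N => (i : ℕ) < k), |x i| ^ α) :
    (∀ φ : EuclideanSpace ℝ (Fin N) → ℝ, ContDiff ℝ 2 φ →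
      ∀ x, IsLocalMin (fun y => u y - φ y) x →
        sortedEig (hess φ x) ⟨k - 1, by omega⟩ ≤ 0) ∧
    (∀ x : EuclideanSpace ℝ (Fin N), (∀ i : Fin N, (i : ℕ) < k → x i ≠ 0) →
      IsGreatest {y : ℝ | ∃ i : Fin N, (i : ℕ) < k ∧ y = α * (α - 1) * |x i| ^ (α - 2)}
        (sortedEig (hess u x) ⟨k - 1, by omega⟩) ∧
      sortedEig (hess u x) ⟨k - 1, by omega⟩ < 0) := by
  subst hu
  set s : Finset (Fin N) := {i | (i : ℕ) < k}
  have hs : #s = k := by rw [Fin.card_filter_val_lt]; omega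
  have hs_mem : ∀ i, i ∈ s ↔ (i : ℕ) < k := by simp [s]
  refine ⟨fun φ hφ x hmin => sortedEig_hess_nonpos_of_isLocalMin_sub hφ hmin s
    (fun y z h => sum_congr rfl fun i hi => by rw [h i hi]) (by rw [hs, Fin.val_mk]; omega),
    fun x hx => ?_⟩
  have hx' : ∀ i ∈ s, x i ≠ 0 := fun i hi => hx i ((hs_mem i).1 hi)
  have hneg : ∀ i ∈ s, α * (α - 1) * |x i| ^ (α - 2) < 0 := fun i hi =>
    mul_neg_of_neg_of_pos (by nlinarith) (Real.rpow_pos_of_pos (abs_pos.2 (hx' i hi)) _)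
  rw [hess_sum_abs_rpow α hx']
  let d : Fin N → ℝ := fun i => if i ∈ s then α * (α - 1) * |x i| ^ (α - 2) else 0
  have hG := isGreatest_image_sortedEig_diagonal (d := d) (s := s) (j := ⟨k - 1, by omega⟩)
    (by rw [hs, Fin.val_mk]; omega) fun i hi i' hi' => by
      simpa only [d, if_pos hi, if_neg hi'] using (hneg i hi).le
  have himage : d '' s = {y | ∃ i : Fin N, (i : ℕ) < k ∧ y = α * (α - 1) * |x i| ^ (α - 2)} := by
    ext y
    simp only [d, Set.mem_image, mem_coe, hs_mem, Set.mem_ofPred_eq]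
    exact exists_congr fun i => and_congr_right fun hi => by rw [if_pos hi, eq_comm]
  rw [himage] at hG
  obtain ⟨i, hi, hy⟩ := hG.1
  exact ⟨hG, hy ▸ hneg i ((hs_mem i).2 hi)⟩
end
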